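/- arXiv:1408.4364 — 2 statements merged into one kernel-verified Lean document; each statement's English description precedes it below -/
import Mathlib

section
/- Let 𝒫 be a class of subsets of a finite set V with the property: whenever A, B ∈ 𝒫, |A| = |B|, and |A ∩ B| = |A| − 1, then A ∩ B ∈ 𝒫. Then the complement class 𝒮 = 2^V \ 𝒫 satisfies the exchange property: for any A, B ∈ 𝒮 with |A| > |B|, there exists a ∈ A \ B with B ∪ {a} ∈ 𝒮. -/
/-!
Suppose every one-element extension `insert a B` with `a ∈ A \ B` lies in `P`. If `A \ B` has two
distinct elements `a, a'`, then `insert a B` and `insert a' B` are sets of the same size meeting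
in `B`, one element fewer, so the closure property puts `B` in `P`. Otherwise `A \ B = {a}`, and
since `|A| > |B|` this forces `A = insert a B ∈ P`. Either way a contradiction.
-/

open Finset

namespace Finset

variable {α : Type*} [DecidableEq α]

theorem insert_inter_insert_of_ne {a b : α} (s : Finset α) (h : a ≠ b) :
    insert a s ∩ insert b s = s := by
  ext x
  grind

theorem eq_insert_of_sdiff_eq_singleton {A B : Finset α} {a : α} (h : A \ B = {a})
    (hcard : #B < #A) : A = insert a B := by
  have hsub : A ⊆ insert a B := by
    rw [insert_eq, union_comm]
    exact sdiff_le_iff.mp h.le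
  exact eq_of_subset_of_card_le hsub ((card_insert_le a B).trans hcard)

end Finset

theorem mem_of_insert_mem_of_insert_mem {α : Type*} [DecidableEq α] {P : Set (Finset α)}
    (hP : ∀ A B : Finset α, A ∈ P → B ∈ P → #A = #B → #(A ∩ B) = #A - 1 → A ∩ B ∈ P)
    {B : Finset α} {a a' : α} (ha : a ∉ B) (ha' : a' ∉ B) (hne : a ≠ a')
    (hB : insert a B ∈ P) (hB' : insert a' B ∈ P) : B ∈ P := by
  have hcap := insert_inter_insert_of_ne B hne
  have hcardB := card_insert_of_notMem ha
  rw [← hcap]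
  exact hP _ _ hB hB' (by rw [hcardB, card_insert_of_notMem ha']) (by rw [hcap, hcardB]; simp)

theorem complement_exchange_general {V : Type*} [DecidableEq V]
    (Pfam : Set (Finset V))
    (hP : ∀ A B : Finset V, A ∈ Pfam → B ∈ Pfam → A.card = B.card →
      (A ∩ B).card = A.card - 1 → A ∩ B ∈ Pfam)
    (A B : Finset V) (hA : A ∉ Pfam) (hB : B ∉ Pfam) (hcard : B.card < A.card) :
    ∃ a ∈ A \ B, insert a B ∉ Pfam := by
  by_contra! hins
  have hdiff : (A \ B).Nonempty := sdiff_nonempty.mpr fun h => (card_le_card h).not_gt hcard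
  obtain ⟨a, hsingle⟩ | ⟨a, ha, a', ha', hne⟩ := hdiff.exists_eq_singleton_or_nontrivial
  · have haAB : a ∈ A \ B := by simp [hsingle]
    exact hA (eq_insert_of_sdiff_eq_singleton hsingle hcard ▸ hins a haAB)
  · exact hB (mem_of_insert_mem_of_insert_mem hP (mem_sdiff.mp ha).2 (mem_sdiff.mp ha').2 hne
      (hins a ha) (hins a' ha'))

/-- Let `Pfam` be a class of subsets of a finite set `V` closed under
intersections of pairs of equal-cardinality sets whose intersection has one fewer
element.  Then `𝒮 = 2^V \ Pfam` satisfies the exchange property: for `A, B ∈ 𝒮` with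
`|A| > |B|` there is `a ∈ A \ B` with `B ∪ {a} ∈ 𝒮`. -/
theorem complement_exchange {V : Type*} [Fintype V] [DecidableEq V]
    (Pfam : Set (Finset V))
    (hP : ∀ A B : Finset V, A ∈ Pfam → B ∈ Pfam → A.card = B.card →
      (A ∩ B).card = A.card - 1 → A ∩ B ∈ Pfam)
    (A B : Finset V) (hA : A ∉ Pfam) (hB : B ∉ Pfam) (hcard : B.card < A.card) :
    ∃ a ∈ A \ B, insert a B ∉ Pfam :=
  complement_exchange_general Pfam hP A B hA hB hcard
end

section
/- Suppose families ĝ_n (1 ≤ n ≤ m) and Ĝ_n (m ≤ n ≤ K) of subsets of a finite set V satisfy: (T1) ĝ_m = Ĝ_m; (T2) every A ∈ ĝ_n with n ≥ 2 contains some B ∈ ĝ_{n−1}, and every A ∈ ĝ_1 contains ∅; (T3) for every B ∈ ĝ_{n−1} and A ∈ ĝ_n there is p ∈ A \ B with B ∪ {p} ∈ ĝ_n; (T4) for n > m, Ĝ_n consists exactly of sets A with |A| = n containing some B ∈ Ĝ_{n−1}, and moreover for any B ∈ Ĝ_{n-1} and A ∈ Ĝ_n there is p ∈ A\B with B ∪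 {p} ∈ Ĝ_n; and all sets in ĝ_n and Ĝ_n have cardinality n. Then the family f_m = {∅} ∪ ĝ_1 ∪ ⋯ ∪ ĝ_m satisfies G1 and G2. -/
open Finset

theorem Finset.exists_erase_eq_of_subset_of_card_succ {α : Type*} [DecidableEq α]
    {s t : Finset α} (hst : s ⊆ t) (hcard : s.card + 1 = t.card) :
    ∃ a ∈ t, t.erase a = s := by
  obtain ⟨a, ha, rfl⟩ := exists_eq_insert_iff.mpr ⟨hst, hcard⟩
  exact ⟨a, mem_insert_self a s, erase_insert ha⟩

theorem exists_subset_card_succ_mem_layers {V : Type*} {m n : ℕ} {g : ℕ → Set (Finset V)}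
    (hgcard : ∀ n, 1 ≤ n → n ≤ m → ∀ A ∈ g n, A.card = n)
    (hdown : ∀ n, 2 ≤ n → n ≤ m → ∀ A ∈ g n, ∃ B ∈ g (n - 1), B ⊆ A)
    (hn1 : 1 ≤ n) (hnm : n ≤ m) {A : Finset V} (hA : A ∈ g n) :
    ∃ B ∈ ({∅} ∪ ⋃ n ∈ Set.Icc 1 m, g n : Set (Finset V)), B ⊆ A ∧ B.card + 1 = A.card := by
  rw [hgcard n hn1 hnm A hA]
  rcases Nat.lt_or_ge n 2 with hn | hn
  · exact ⟨∅, Or.inl rfl, empty_subset A, by rw [card_empty]; omega⟩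
  · obtain ⟨B, hB, hBA⟩ := hdown n hn hnm A hA
    refine ⟨B, Or.inr (Set.mem_biUnion (x := n - 1) ⟨by omega, by omega⟩ hB), hBA, ?_⟩
    rw [hgcard (n - 1) (by omega) (by omega) B hB]
    omega

theorem layered_family_G1_G2_general {V : Type*} [DecidableEq V]
    (m : ℕ)
    (g : ℕ → Set (Finset V))
    (hgcard : ∀ n, 1 ≤ n → n ≤ m → ∀ A ∈ g n, A.card = n)
    (T2 : (∀ n, 2 ≤ n → n ≤ m → ∀ A ∈ g n, ∃ B ∈ g (n - 1), B ⊆ A) ∧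
      ∀ A ∈ g 1, (∅ : Finset V) ⊆ A) :
    (∅ : Finset V) ∈ ({∅} ∪ ⋃ n ∈ Set.Icc 1 m, g n : Set (Finset V)) ∧
      ∀ A ∈ ({∅} ∪ ⋃ n ∈ Set.Icc 1 m, g n : Set (Finset V)), A ≠ ∅ →
        ∃ a ∈ A, A.erase a ∈ ({∅} ∪ ⋃ n ∈ Set.Icc 1 m, g n : Set (Finset V)) := by
  refine ⟨Or.inl rfl, ?_⟩
  rintro A (hA | hA) hAne
  · exact absurd hA hAne
  obtain ⟨n, ⟨hn1, hnm⟩, hAn⟩ := Set.mem_iUnion₂.mp hA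
  obtain ⟨B, hB, hBA, hcard⟩ :=
    exists_subset_card_succ_mem_layers hgcard T2.1 hn1 hnm hAn
  obtain ⟨a, ha, hErase⟩ := exists_erase_eq_of_subset_of_card_succ hBA hcard
  exact ⟨a, ha, hErase ▸ hB⟩

/-- Given layered families `ĝ_n` (`1 ≤ n ≤ m`) and `Ĝ_n`
(`m ≤ n ≤ K`) of `n`-element subsets of a finite set `V` satisfying T1–T4, the family
`f_m = {∅} ∪ ĝ_1 ∪ ⋯ ∪ ĝ_m` satisfies the greedoid axioms G1 and G2. -/
theorem layered_family_G1_G2 {V : Type*} [Fintype V] [DecidableEq V]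
    (m K : ℕ) (hm : 1 ≤ m) (hmK : m ≤ K)
    (g G : ℕ → Set (Finset V))
    (hgcard : ∀ n, 1 ≤ n → n ≤ m → ∀ A ∈ g n, A.card = n)
    (hGcard : ∀ n, m ≤ n → n ≤ K → ∀ A ∈ G n, A.card = n)
    (T1 : g m = G m)
    (T2 : (∀ n, 2 ≤ n → n ≤ m → ∀ A ∈ g n, ∃ B ∈ g (n - 1), B ⊆ A) ∧
      ∀ A ∈ g 1, (∅ : Finset V) ⊆ A)
    (T3 : ∀ n, 2 ≤ n → n ≤ m → ∀ B ∈ g (n - 1), ∀ A ∈ g n,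
      ∃ p ∈ A, p ∉ B ∧ insert p B ∈ g n)
    (T4 : ∀ n, m < n → n ≤ K →
      (G n = {A : Finset V | A.card = n ∧ ∃ B ∈ G (n - 1), B ⊆ A}) ∧
      ∀ B ∈ G (n - 1), ∀ A ∈ G n, ∃ p ∈ A, p ∉ B ∧ insert p B ∈ G n) :
    (∅ : Finset V) ∈ ({∅} ∪ ⋃ n ∈ Set.Icc 1 m, g n : Set (Finset V)) ∧
      ∀ A ∈ ({∅} ∪ ⋃ n ∈ Set.Icc 1 m, g n : Set (Finset V)), A ≠ ∅ →
        ∃ a ∈ A, A.erase a ∈ ({∅} ∪ ⋃ n ∈ Set.Icc 1 m, g n : Set (Finset V)) :=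
  layered_family_G1_G2_general m g hgcard T2
end
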